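/- A connected signed graph G is balanced (i.e., its vertex set can be partitioned into two sets V1, V2 such that every edge within V1 or within V2 is positive and every edge between V1 and V2 is negative) if and only if the smallest eigenvalue of its signed Laplacian L = D - A is equal to 0. -/

import Mathlib

open Matrix

structure SignedGraph (V : Type) [Fintype V] [DecidableEq V] where
  sign : V → V → ℝ
  symm : ∀ i j, sign i j = sign j i
  loopless : ∀ i, sign i i = 0
  vals : ∀ i j, sign i j = 0 ∨ sign i j = 1 ∨ sign i j = -1

variable {V : Type} [Fintype V] [DecidableEq V]

/-- The signed adjacency matrix. -/
def SignedGraph.adj (G : SignedGraph V) : Matrix V V ℝ :=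
  Matrix.of G.sign

/-- The degree of a vertex: number of incident edges of either sign. -/
def SignedGraph.deg (G : SignedGraph V) (i : V) : ℝ :=
  ∑ j, |G.sign i j|

/-- The signed Laplacian L = D - A. -/
def SignedGraph.lap (G : SignedGraph V) : Matrix V V ℝ :=
  Matrix.diagonal G.deg - G.adj

/-- A signed graph is balanced if the vertices can be two-colored (±1) so that
every edge sign equals the product of its endpoint colors. -/
def SignedGraph.Balanced (G : SignedGraph V) : Prop :=
  ∃ x : V → ℝ, (∀ i, x i = 1 ∨ x i = -1) ∧
    ∀ i j, G.sign i j ≠ 0 → G.sign i j = x i * x j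

/-- Connectivity of a signed graph. -/
def SignedGraph.Connected (G : SignedGraph V) : Prop :=
  ∀ i j : V, Relation.ReflTransGen (fun a b => G.sign a b ≠ 0) i j

/-- The induced signed subgraph on a vertex set. -/
def SignedGraph.induce (G : SignedGraph V) (S : Finset V) :
    SignedGraph {v // v ∈ S} where
  sign a b := G.sign a.1 b.1
  symm a b := G.symm a.1 b.1
  loopless a := G.loopless a.1
  vals a b := G.vals a.1 b.1

/-- The underlying simple graph of a signed graph. -/
def SignedGraph.toSimpleGraph (G : SignedGraph V) : SimpleGraph V where
  Adj i j := G.sign i j ≠ 0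
  symm := by
    constructor
    intro i j h
    rw [G.symm j i]
    exact h
  loopless := by
    constructor
    intro i h
    exact h (G.loopless i)

/-!
The quadratic form of the signed Laplacian is `½ ∑ᵢ ∑ⱼ |σᵢⱼ| (xᵢ - σᵢⱼ xⱼ)²`, so `L` is positive
semidefinite and its smallest eigenvalue vanishes iff `L` has a nonzero kernel vector `x`, i.e. one
with `xᵢ = σᵢⱼ xⱼ` along every edge. A ±1 coloring witnessing balance is such a vector; conversely,
on a connected graph `|x|` is constant and nonzero, so `x / |x|` is a balancing coloring.
-/

open scoped ComplexOrder in
theorem Matrix.PosSemidef.iInf_eigenvalues_eq_zero_iff {n 𝕜 : Type*} [Fintype n] [DecidableEq n]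
    [Nonempty n] [RCLike 𝕜] {A : Matrix n n 𝕜} (hA : A.PosSemidef) :
    (⨅ i, hA.1.eigenvalues i) = 0 ↔ A.det = 0 := by
  rw [hA.1.det_eq_prod_eigenvalues, Finset.prod_eq_zero_iff]
  simp only [Finset.mem_univ, true_and, RCLike.ofReal_eq_zero]
  constructor
  · intro h
    obtain ⟨i, hi⟩ := exists_eq_ciInf_of_finite (f := hA.1.eigenvalues)
    exact ⟨i, hi.trans h⟩
  · rintro ⟨i, hi⟩
    exact le_antisymm (hi ▸ ciInf_le (Finite.bddBelow_range _) i)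
      (le_ciInf hA.eigenvalues_nonneg)

namespace SignedGraph

variable (G : SignedGraph V)

theorem abs_sign_eq_one {i j : V} (h : G.sign i j ≠ 0) : |G.sign i j| = 1 := by
  rcases G.vals i j with h' | h' | h' <;> simp_all

theorem abs_sign_mul_sign (i j : V) : |G.sign i j| * G.sign i j = G.sign i j := by
  rcases G.vals i j with h | h | h <;> simp [h]

theorem lap_mulVec_apply (x : V → ℝ) (i : V) :
    (G.lap *ᵥ x) i = ∑ j, |G.sign i j| * (x i - G.sign i j * x j) := by
  rw [lap, sub_mulVec, Pi.sub_apply, mulVec_diagonal, deg, Finset.sum_mul, adj, mulVec,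
    dotProduct, ← Finset.sum_sub_distrib]
  refine Finset.sum_congr rfl fun j _ => ?_
  rw [of_apply, mul_sub, ← mul_assoc, abs_sign_mul_sign]

theorem dotProduct_lap_mulVec (x : V → ℝ) :
    x ⬝ᵥ (G.lap *ᵥ x) = (1 / 2) * ∑ i, ∑ j, |G.sign i j| * (x i - G.sign i j * x j) ^ 2 := by
  have hquad : x ⬝ᵥ (G.lap *ᵥ x) = ∑ i, ∑ j, x i * (|G.sign i j| * (x i - G.sign i j * x j)) := by
    simp only [dotProduct, lap_mulVec_apply, Finset.mul_sum]
  have hterm (i j : V) : |G.sign i j| * (x i - G.sign i j * x j) ^ 2 =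
      x i * (|G.sign i j| * (x i - G.sign i j * x j)) +
        x j * (|G.sign j i| * (x j - G.sign j i * x i)) := by
    rw [G.symm j i]
    rcases G.vals i j with h | h | h <;> rw [h] <;> norm_num <;> ring
  simp only [hterm, Finset.sum_add_distrib]
  rw [Finset.sum_comm (f := fun i j => x j * _), ← hquad]
  ring

theorem isHermitian_lap : G.lap.IsHermitian :=
  (isHermitian_diagonal _).sub <| .ext fun i j => by
    rw [adj, of_apply, of_apply, star_trivial, G.symm]

theorem posSemidef_lap : G.lap.PosSemidef :=
  .of_dotProduct_mulVec_nonneg G.isHermitian_lap fun x => by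
    rw [star_trivial, dotProduct_lap_mulVec]
    positivity

theorem lap_mulVec_eq_zero_iff {x : V → ℝ} :
    G.lap *ᵥ x = 0 ↔ ∀ i j, G.sign i j ≠ 0 → x i = G.sign i j * x j := by
  constructor
  · intro hx i j hij
    have hsum : ∑ i, ∑ j, |G.sign i j| * (x i - G.sign i j * x j) ^ 2 = 0 := by
      have := G.dotProduct_lap_mulVec x
      rw [hx, dotProduct_zero] at this
      linarith
    have hrow := (Finset.sum_eq_zero_iff_of_nonneg fun i _ =>
      Finset.sum_nonneg fun j _ => by positivity).mp hsum i (Finset.mem_univ i)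
    have hij' := (Finset.sum_eq_zero_iff_of_nonneg fun j _ => by positivity).mp hrow j
      (Finset.mem_univ j)
    rwa [G.abs_sign_eq_one hij, one_mul, sq_eq_zero_iff, sub_eq_zero] at hij'
  · intro h
    funext i
    rw [lap_mulVec_apply]
    refine Finset.sum_eq_zero fun j _ => ?_
    by_cases hij : G.sign i j = 0
    · simp [hij]
    · rw [← h i j hij, sub_self, mul_zero]

theorem abs_eq_abs_of_connected (hconn : G.Connected) {x : V → ℝ}
    (hx : ∀ i j, G.sign i j ≠ 0 → x i = G.sign i j * x j) (i j : V) : |x i| = |x j| := by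
  induction hconn i j with
  | refl => rfl
  | tail _ hbc ih => rw [ih, hx _ _ hbc, abs_mul, G.abs_sign_eq_one hbc, one_mul]

theorem balanced_of_abs_eq_one {y : V → ℝ} (hy : ∀ i, |y i| = 1)
    (h : ∀ i j, G.sign i j ≠ 0 → y i = G.sign i j * y j) : G.Balanced :=
  ⟨y, fun i => (abs_eq zero_le_one).mp (hy i), fun i j hij => by
    rw [h i j hij, mul_assoc, ← abs_mul_abs_self, hy, mul_one, mul_one]⟩

theorem balanced_iff_exists_lap_mulVec_eq_zero [Nonempty V] (hconn : G.Connected) :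
    G.Balanced ↔ ∃ x ≠ 0, G.lap *ᵥ x = 0 := by
  constructor
  · rintro ⟨x, hx, hsign⟩
    refine ⟨x, fun h0 => ?_, G.lap_mulVec_eq_zero_iff.mpr fun i j hij => ?_⟩
    · have := hx (Classical.arbitrary V)
      simp [h0] at this
    · rw [hsign i j hij]
      rcases hx j with h | h <;> simp [h]
  · rintro ⟨x, hx0, hx⟩
    rw [lap_mulVec_eq_zero_iff] at hx
    obtain ⟨k, hk⟩ : ∃ k, x k ≠ 0 := Function.ne_iff.mp hx0
    refine G.balanced_of_abs_eq_one (y := |x k|⁻¹ • x) (fun i => ?_) fun i j hij => ?_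
    · simp [abs_mul, G.abs_eq_abs_of_connected hconn hx i k, hk]
    · simp only [Pi.smul_apply, smul_eq_mul, hx i j hij]
      ring

end SignedGraph

theorem stmt0 [Nonempty V] (G : SignedGraph V) (hconn : G.Connected)
    (hL : G.lap.IsHermitian) :
    G.Balanced ↔ (⨅ i, hL.eigenvalues i) = 0 := by
  rw [G.balanced_iff_exists_lap_mulVec_eq_zero hconn, exists_mulVec_eq_zero_iff,
    G.posSemidef_lap.iInf_eigenvalues_eq_zero_iff]
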